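/- Let 0 < ε ≤ 1/4. There exist constants c, c' > 0 such that for every T with 0 < T ≤ 1/2 and every real number a > 0 with T ≤ a², ∫_{T/2}^{T} s^{-1/4} (-ln s)^{-1/4-ε} (T - s)^{-3/2} e^{-a²/(T-s)} ds ≥ c T^{-3/4} (-ln T)^{-1/4-ε} e^{-c' a²/T}. -/

import Mathlib

open MeasureTheory Real Set

/-!
On the left half `(T/2, 3T/4)` of the interval every factor of the integrand is bounded below
by its value at a single scale: `s ^ (-1/4) ≥ T ^ (-1/4)`, `(T - s) ^ (-3/2) ≥ T ^ (-3/2)`,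
`exp (-a²/(T - s)) ≥ exp (-4a²/T)`, and `-log s` lies in `[-log T, -2 log T]` because `T ≤ 1/2`,
so `(-log s) ^ p` is comparable to `(-log T) ^ p` for every exponent `p`. Integrating over an
interval of length `T/4` gives the bound with `c' = 4`. The integral is finite because
`u ^ (-3/2) exp (-a²/u) ≤ 2/a⁴` for `0 < u ≤ 1`.
-/

lemma exp_neg_le_two_div_sq {x : ℝ} (hx : 0 < x) : exp (-x) ≤ 2 / x ^ 2 := by
  have h := pow_div_factorial_le_exp x hx.le 2
  rw [exp_neg, inv_le_comm₀ (exp_pos x) (by positivity), inv_div]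
  simpa using h

lemma rpow_neg_three_halves_mul_exp_neg_div_le {b u : ℝ} (hb : 0 < b) (hu : 0 < u)
    (hu1 : u ≤ 1) : u ^ (-(3/2) : ℝ) * exp (-b / u) ≤ 2 / b ^ 2 := by
  have hpow : u ^ (-(3/2) : ℝ) ≤ (u ^ 2)⁻¹ := by
    rw [← rpow_natCast, ← rpow_neg hu.le]
    exact rpow_le_rpow_of_exponent_ge hu hu1 (by norm_num)
  have hexp : exp (-b / u) ≤ 2 / (b / u) ^ 2 := by
    rw [neg_div]; exact exp_neg_le_two_div_sq (by positivity)
  calc u ^ (-(3/2) : ℝ) * exp (-b / u) ≤ (u ^ 2)⁻¹ * (2 / (b / u) ^ 2) :=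
        mul_le_mul hpow hexp (exp_pos _).le (by positivity)
    _ = 2 / b ^ 2 := by field_simp

section Comparable

variable {L x : ℝ} (p : ℝ)

lemma min_one_two_rpow_mul_rpow_le_rpow (hL : 0 < L) (hLx : L ≤ x) (hx : x ≤ 2 * L) :
    min 1 (2 ^ p) * L ^ p ≤ x ^ p := by
  rcases le_total 0 p with hp | hp
  · calc min 1 (2 ^ p) * L ^ p ≤ 1 * L ^ p := by gcongr; exact min_le_left _ _
      _ ≤ x ^ p := by rw [one_mul]; exact rpow_le_rpow hL.le hLx hp
  · calc min 1 (2 ^ p) * L ^ p ≤ 2 ^ p * L ^ p := by gcongr; exact min_le_right _ _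
      _ = (2 * L) ^ p := (mul_rpow zero_le_two hL.le).symm
      _ ≤ x ^ p := rpow_le_rpow_of_nonpos (hL.trans_le hLx) hx hp

lemma rpow_le_max_one_two_rpow_mul_rpow (hL : 0 < L) (hLx : L ≤ x) (hx : x ≤ 2 * L) :
    x ^ p ≤ max 1 (2 ^ p) * L ^ p := by
  rcases le_total 0 p with hp | hp
  · calc x ^ p ≤ (2 * L) ^ p := rpow_le_rpow (hL.le.trans hLx) hx hp
      _ = 2 ^ p * L ^ p := mul_rpow zero_le_two hL.le
      _ ≤ max 1 (2 ^ p) * L ^ p := by gcongr; exact le_max_right _ _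
  · calc x ^ p ≤ 1 * L ^ p := by rw [one_mul]; exact rpow_le_rpow_of_nonpos hL hLx hp
      _ ≤ max 1 (2 ^ p) * L ^ p := by gcongr; exact le_max_left _ _

end Comparable

lemma neg_log_mem_Icc {T s : ℝ} (hT : T ≤ 1/2) (hs : s ∈ Ioc (T/2) T) :
    -log s ∈ Icc (-log T) (2 * -log T) := by
  have hT0 : 0 < T := by linarith [hs.1, hs.2]
  have hs0 : 0 < s := by linarith [hs.1]
  have hlogT : log T ≤ -log 2 := by
    rw [← log_inv]; exact log_le_log hT0 (by norm_num [hT])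
  have hlow : log T - log 2 ≤ log s := by
    rw [← log_div hT0.ne' two_ne_zero]; exact log_le_log (by positivity) hs.1.le
  exact ⟨neg_le_neg (log_le_log hs0 hs.2), by linarith⟩


noncomputable def heatIntegrand (p T a s : ℝ) : ℝ :=
  s ^ (-(1/4) : ℝ) * (-log s) ^ p * (T - s) ^ (-(3/2) : ℝ) * exp (-(a^2) / (T - s))

section HeatIntegrand

variable {p T a : ℝ}

lemma heatIntegrand_nonneg (hT : T ≤ 1/2) {s : ℝ} (hs : s ∈ Ioo (T/2) T) :
    0 ≤ heatIntegrand p T a s := by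
  have hs0 : 0 < s := by linarith [hs.1, hs.2]
  have hlog : 0 ≤ -log s := neg_nonneg.2 (log_nonpos hs0.le (by linarith [hs.2]))
  have hu : 0 ≤ T - s := by linarith [hs.2]
  unfold heatIntegrand
  positivity

lemma integrableOn_heatIntegrand (hT : T ≤ 1/2) (ha : 0 < a) :
    IntegrableOn (heatIntegrand p T a) (Ioo (T/2) T) := by
  refine Measure.integrableOn_of_bounded
    (M := (T/2) ^ (-(1/4) : ℝ) * (max 1 (2 ^ p) * (-log T) ^ p) * (2 / (a ^ 2) ^ 2))
    measure_Ioo_lt_top.ne (by unfold heatIntegrand; fun_prop) ?_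
  filter_upwards [ae_restrict_mem measurableSet_Ioo] with s hs
  have hT0 : 0 < T := by linarith [hs.1, hs.2]
  have hlog := neg_log_mem_Icc hT (Ioo_subset_Ioc_self hs)
  have hL : 0 < -log T := by linarith [log_neg hT0 (by linarith : T < 1)]
  have hlog0 : 0 ≤ -log s := hL.le.trans hlog.1
  have hu : 0 < T - s := by linarith [hs.2]
  have h1 : s ^ (-(1/4) : ℝ) ≤ (T/2) ^ (-(1/4) : ℝ) :=
    rpow_le_rpow_of_nonpos (by positivity) hs.1.le (by norm_num)
  have h2 := rpow_le_max_one_two_rpow_mul_rpow p hL hlog.1 hlog.2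
  have h3 := rpow_neg_three_halves_mul_exp_neg_div_le (pow_pos ha 2) hu (by linarith [hs.1])
  rw [Real.norm_of_nonneg (heatIntegrand_nonneg hT hs), heatIntegrand, mul_assoc]
  exact mul_le_mul (mul_le_mul h1 h2 (by positivity) (by positivity)) h3 (by positivity)
    (by positivity)

lemma le_heatIntegrand (hT : T ≤ 1/2) {s : ℝ} (hs : s ∈ Ioo (T/2) (3*T/4)) :
    min 1 (2 ^ p) * (-log T) ^ p * T ^ (-(1/4) : ℝ) * T ^ (-(3/2) : ℝ) * exp (-(4 * a^2) / T)
      ≤ heatIntegrand p T a s := by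
  have hT0 : 0 < T := by linarith [hs.1, hs.2]
  have hs0 : 0 < s := by linarith [hs.1]
  have hu : T / 4 ≤ T - s := by linarith [hs.2]
  have hu0 : 0 < T - s := by linarith
  have hlog := neg_log_mem_Icc hT ⟨hs.1, by linarith [hs.2]⟩
  have hL : 0 < -log T := by linarith [log_neg hT0 (by linarith : T < 1)]
  have hlog0 : 0 ≤ -log s := hL.le.trans hlog.1
  have h1 : T ^ (-(1/4) : ℝ) ≤ s ^ (-(1/4) : ℝ) :=
    rpow_le_rpow_of_nonpos hs0 (by linarith [hs.2]) (by norm_num)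
  have h2 := min_one_two_rpow_mul_rpow_le_rpow p hL hlog.1 hlog.2
  have h3 : T ^ (-(3/2) : ℝ) ≤ (T - s) ^ (-(3/2) : ℝ) :=
    rpow_le_rpow_of_nonpos (by linarith) (by linarith) (by norm_num)
  have h4 : exp (-(4 * a^2) / T) ≤ exp (-(a^2) / (T - s)) := by
    rw [exp_le_exp, neg_div, neg_div, neg_le_neg_iff, div_le_div_iff₀ (by linarith) hT0]
    nlinarith [sq_nonneg a]
  calc _ = T ^ (-(1/4) : ℝ) * (min 1 (2 ^ p) * (-log T) ^ p) * T ^ (-(3/2) : ℝ)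
        * exp (-(4 * a^2) / T) := by ring
    _ ≤ heatIntegrand p T a s :=
      mul_le_mul (mul_le_mul (mul_le_mul h1 h2 (by positivity) (by positivity)) h3
        (by positivity) (by positivity)) h4 (by positivity) (by positivity)

end HeatIntegrand

theorem stmt_11_general (ε : ℝ) :
    ∃ c c' : ℝ, 0 < c ∧ 0 < c' ∧ ∀ T : ℝ, 0 < T → T ≤ 1/2 → ∀ a : ℝ, 0 < a → T ≤ a^2 →
      c * T ^ (-(3/4) : ℝ) * (-Real.log T) ^ (-(1/4) - ε) * Real.exp (-(c'*a^2)/T) ≤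
        ∫ s in Ioo (T/2) T,
          s ^ (-(1/4) : ℝ) * (-Real.log s) ^ (-(1/4) - ε) *
            (T - s) ^ (-(3/2) : ℝ) * Real.exp (-(a^2)/(T - s)) := by
  set p := -(1/4) - ε
  refine ⟨min 1 (2 ^ p) / 4, 4, by positivity, by norm_num, fun T hT0 hT a ha _ ↦ ?_⟩
  have hpow : T * T ^ (-(1/4) : ℝ) * T ^ (-(3/2) : ℝ) = T ^ (-(3/4) : ℝ) := by
    rw [← rpow_one_add' hT0.le (by norm_num), ← rpow_add hT0]
    norm_num
  have hsub : Ioo (T/2) (3*T/4) ⊆ Ioo (T/2) T := Ioo_subset_Ioo_right (by linarith)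
  have hint := integrableOn_heatIntegrand (p := p) hT ha
  calc min 1 (2 ^ p) / 4 * T ^ (-(3/4) : ℝ) * (-log T) ^ p * exp (-(4 * a^2) / T)
      = (T/4) * (min 1 (2 ^ p) * (-log T) ^ p * T ^ (-(1/4) : ℝ) * T ^ (-(3/2) : ℝ)
          * exp (-(4 * a^2) / T)) := by rw [← hpow]; ring
    _ = ∫ _ in Ioo (T/2) (3*T/4), min 1 (2 ^ p) * (-log T) ^ p * T ^ (-(1/4) : ℝ)
          * T ^ (-(3/2) : ℝ) * exp (-(4 * a^2) / T) := by
      rw [setIntegral_const, Real.volume_real_Ioo_of_le (by linarith), smul_eq_mul]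
      ring
    _ ≤ ∫ s in Ioo (T/2) (3*T/4), heatIntegrand p T a s :=
      setIntegral_mono_on (integrableOn_const measure_Ioo_lt_top.ne) (hint.mono_set hsub)
        measurableSet_Ioo fun s hs ↦ le_heatIntegrand hT hs
    _ ≤ ∫ s in Ioo (T/2) T, heatIntegrand p T a s :=
      setIntegral_mono_set hint
        (ae_restrict_of_forall_mem measurableSet_Ioo fun s hs ↦ heatIntegrand_nonneg hT hs)
        hsub.eventuallyLE

theorem stmt_11 (ε : ℝ) (hε : 0 < ε) (hε' : ε ≤ 1/4) :
    ∃ c c' : ℝ, 0 < c ∧ 0 < c' ∧ ∀ T : ℝ, 0 < T → T ≤ 1/2 → ∀ a : ℝ, 0 < a → T ≤ a^2 →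
      c * T ^ (-(3/4) : ℝ) * (-Real.log T) ^ (-(1/4) - ε) * Real.exp (-(c'*a^2)/T) ≤
        ∫ s in Ioo (T/2) T,
          s ^ (-(1/4) : ℝ) * (-Real.log s) ^ (-(1/4) - ε) *
            (T - s) ^ (-(3/2) : ℝ) * Real.exp (-(a^2)/(T - s)) :=
  stmt_11_general ε
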